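/- arXiv:2307.02373 — 2 statements merged into one kernel-verified Lean document; each statement's English description precedes it below -/
import Mathlib

section
/- The strong metric dimension of the Petersen graph is 8. -/
open SimpleGraph

variable {V : Type*} {W : Type*}

/-- `x` lies on some `y`–`z` geodesic in `G`. -/
def LiesOnGeodesic (G : SimpleGraph V) (x y z : V) : Prop :=
  G.dist y x + G.dist x z = G.dist y z

/-- A strong resolving set of `G`. -/
def IsStrongResolvingSet (G : SimpleGraph V) (S : Set V) : Prop :=
  ∀ x y : V, x ≠ y → ∃ z ∈ S,
    LiesOnGeodesic G x y z ∨ LiesOnGeodesic G y x z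

/-- The strong metric dimension of a finite graph. -/
noncomputable def sdim (G : SimpleGraph V) [Fintype V] : ℕ :=
  sInf {n : ℕ | ∃ S : Finset V, S.card = n ∧ IsStrongResolvingSet G ↑S}

/-- `u` is maximally distant from `v` in `G`. -/
def MaxDistFrom (G : SimpleGraph V) (u v : V) : Prop :=
  ∀ w : V, G.Adj u w → G.dist w v ≤ G.dist u v

/-- `u` and `v` are mutually maximally distant in `G`. -/
def MutMaxDist (G : SimpleGraph V) (u v : V) : Prop :=
  MaxDistFrom G u v ∧ MaxDistFrom G v u

/-- The strong resolving graph of `G` (on the full vertex set; vertices not in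
any MMD pair are isolated). -/
def srGraph (G : SimpleGraph V) : SimpleGraph V where
  Adj u v := u ≠ v ∧ MutMaxDist G u v
  symm := ⟨by
    rintro u v ⟨h, h1, h2⟩
    exact ⟨h.symm, h2, h1⟩⟩
  loopless := ⟨by rintro v ⟨h, -⟩; exact h rfl⟩

/-- The Petersen graph as the Kneser graph `K(5,2)`. -/
def petersenGraph : SimpleGraph {s : Finset (Fin 5) // s.card = 2} where
  Adj a b := Disjoint a.val b.val
  symm := ⟨fun _ _ h => h.symm⟩
  loopless := ⟨by
    intro a h
    have h2 : a.val = ∅ := disjoint_self.mp h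
    have := a.property
    rw [h2] at this
    simp at this⟩

/-!
A strong resolving set must contain one vertex of every mutually maximally distant pair, since a
geodesic through `x` towards any other vertex could be extended past `x`. In a connected graph
of diameter two every pair of distinct non-adjacent vertices is mutually maximally distant, so
the vertices outside a strong resolving set form a clique; the Petersen graph is triangle-free,
so at most two of its ten vertices are missed. Conversely, in a triangle-free graph all vertices
but the ends of an edge `ab` form a strong resolving set: a further neighbour `c` of `a` has `a`
on the `b`–`c` geodesic.
-/

open Finset

section StrongResolving

variable {G : SimpleGraph V}

lemma SimpleGraph.IsClique.card_le_of_cliqueFree {n : ℕ} {s : Finset V}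
    (hs : G.IsClique (s : Set V)) (hG : G.CliqueFree (n + 1)) : #s ≤ n := by
  by_contra! h
  obtain ⟨t, hts, ht⟩ := exists_subset_card_eq h
  exact hG t ⟨hs.subset hts, ht⟩

lemma liesOnGeodesic_self (G : SimpleGraph V) (x y : V) : LiesOnGeodesic G x y x := by
  simp [LiesOnGeodesic]

lemma liesOnGeodesic_of_adj_of_adj (hG : G.CliqueFree 3) {a b c : V} (hba : G.Adj b a)
    (hac : G.Adj a c) (hbc : b ≠ c) : LiesOnGeodesic G a b c := by
  have hnadj : ¬ G.Adj b c := fun h ↦ by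
    classical exact hG {b, a, c} (is3Clique_triple_iff.mpr ⟨hba, h, hac⟩)
  have hlt : 1 < G.dist b c :=
    (hba.reachable.trans hac.reachable).one_lt_dist_of_ne_of_not_adj hbc hnadj
  have hle : G.dist b c ≤ 2 := dist_le (hba.toWalk.append hac.toWalk)
  simp only [LiesOnGeodesic, dist_eq_one_iff_adj.mpr hba, dist_eq_one_iff_adj.mpr hac]
  omega

/-- If `x` lay strictly inside a `y`–`z` geodesic, the neighbour of `x` on it towards `z` would be
farther from `y` than `x` is. -/
lemma MaxDistFrom.eq_of_liesOnGeodesic (hG : G.Connected) {x y z : V} (hx : MaxDistFrom G x y)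
    (h : LiesOnGeodesic G x y z) : z = x := by
  obtain ⟨p, hp⟩ := hG.exists_walk_length_eq_dist x z
  cases p with
  | nil => rfl
  | @cons _ w _ hxw q =>
    have hwz : G.dist w z ≤ q.length := dist_le q
    have hyz : G.dist y z ≤ G.dist y w + G.dist w z := hG.dist_triangle
    have hwy : G.dist w y ≤ G.dist x y := hx w hxw
    simp only [LiesOnGeodesic, Walk.length_cons] at h hp
    rw [dist_comm (u := y) (v := x), dist_comm (u := y) (v := w)] at *
    omega

lemma IsStrongResolvingSet.mem_or_mem_of_srGraph_adj (hG : G.Connected) {S : Set V}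
    (hS : IsStrongResolvingSet G S) {x y : V} (hxy : (srGraph G).Adj x y) :
    x ∈ S ∨ y ∈ S := by
  obtain ⟨hne, hx, hy⟩ := hxy
  obtain ⟨z, hzS, hxz | hyz⟩ := hS x y hne
  · exact .inl (hx.eq_of_liesOnGeodesic hG hxz ▸ hzS)
  · exact .inr (hy.eq_of_liesOnGeodesic hG hyz ▸ hzS)

lemma srGraph_adj_of_not_adj (hG : G.Connected) (hdiam : ∀ u v, G.dist u v ≤ 2) {x y : V}
    (hxy : x ≠ y) (hadj : ¬ G.Adj x y) : (srGraph G).Adj x y := by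
  have hlt : 1 < G.dist x y := hG.one_lt_dist_of_ne_of_not_adj hxy hadj
  refine ⟨hxy, fun w _ ↦ ?_, fun w _ ↦ ?_⟩
  · have := hdiam w y
    omega
  · have := hdiam w x
    rw [dist_comm (u := y)]
    omega

lemma IsStrongResolvingSet.isClique_compl (hG : G.Connected) (hdiam : ∀ u v, G.dist u v ≤ 2)
    {S : Set V} (hS : IsStrongResolvingSet G S) : G.IsClique Sᶜ := by
  intro x hx y hy hxy
  by_contra hadj
  have hsr := srGraph_adj_of_not_adj hG hdiam hxy hadj
  rcases hS.mem_or_mem_of_srGraph_adj hG hsr with h | h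
  exacts [hx h, hy h]

lemma isStrongResolvingSet_compl_pair (hG : G.CliqueFree 3) {a b c : V} (hab : G.Adj a b)
    (hac : G.Adj a c) (hbc : b ≠ c) : IsStrongResolvingSet G ({a, b}ᶜ : Set V) := by
  have hc : c ∈ ({a, b}ᶜ : Set V) := by
    simp [hac.ne.symm, hbc.symm]
  have hgeo : LiesOnGeodesic G a b c := liesOnGeodesic_of_adj_of_adj hG hab.symm hac hbc
  intro x y hxy
  by_cases hx : x ∈ ({a, b}ᶜ : Set V)
  · exact ⟨x, hx, .inl (liesOnGeodesic_self G x y)⟩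
  by_cases hy : y ∈ ({a, b}ᶜ : Set V)
  · exact ⟨y, hy, .inr (liesOnGeodesic_self G y x)⟩
  simp only [Set.mem_compl_iff, Set.mem_insert_iff, Set.mem_singleton_iff, not_not] at hx hy
  rcases hx with rfl | rfl <;> rcases hy with rfl | rfl
  exacts [absurd rfl hxy, ⟨c, hc, .inl hgeo⟩, ⟨c, hc, .inr hgeo⟩, absurd rfl hxy]

theorem sdim_eq_card_sub_two [Fintype V] [DecidableEq V] (hG : G.Connected)
    (hdiam : ∀ u v, G.dist u v ≤ 2) (h3 : G.CliqueFree 3) {a b c : V} (hab : G.Adj a b)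
    (hac : G.Adj a c) (hbc : b ≠ c) : sdim G = Fintype.card V - 2 := by
  have hpair : IsStrongResolvingSet G (({a, b}ᶜ : Finset V) : Set V) := by
    rw [coe_compl, coe_pair]
    exact isStrongResolvingSet_compl_pair h3 hab hac hbc
  have hmem : Fintype.card V - 2 ∈ {n | ∃ S : Finset V, #S = n ∧ IsStrongResolvingSet G S} :=
    ⟨_, by rw [card_compl, card_pair hab.ne], hpair⟩
  refine le_antisymm (Nat.sInf_le hmem) (le_csInf ⟨_, hmem⟩ ?_)
  rintro _ ⟨S, rfl, hS⟩
  have hclique : G.IsClique ((Sᶜ : Finset V) : Set V) := by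
    rw [coe_compl]
    exact hS.isClique_compl hG hdiam
  have := hclique.card_le_of_cliqueFree h3
  rw [card_compl] at this
  omega

end StrongResolving

instance : DecidableRel petersenGraph.Adj :=
  fun u v ↦ inferInstanceAs (Decidable (Disjoint u.1 v.1))

lemma petersenGraph_cliqueFree_three : petersenGraph.CliqueFree 3 := by
  have : ∀ u v w, petersenGraph.Adj u v → petersenGraph.Adj u w →
      ¬ petersenGraph.Adj v w := by
    decide
  intro t ht
  obtain ⟨u, v, w, huv, huw, hvw, -⟩ := is3Clique_iff.mp ht
  exact this u v w huv huw hvw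

lemma petersenGraph_exists_walk_length_le_two (u v) :
    ∃ p : petersenGraph.Walk u v, p.length ≤ 2 := by
  have : ∀ u v, u = v ∨ petersenGraph.Adj u v ∨
      ∃ w, petersenGraph.Adj u w ∧ petersenGraph.Adj w v := by
    decide
  rcases this u v with rfl | huv | ⟨w, huw, hwv⟩
  exacts [⟨.nil, by simp⟩, ⟨huv.toWalk, by simp⟩,
    ⟨huw.toWalk.append hwv.toWalk, by simp⟩]

lemma petersenGraph_connected : petersenGraph.Connected where
  preconnected u v := (petersenGraph_exists_walk_length_le_two u v).elim fun p _ ↦ ⟨p⟩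
  nonempty := ⟨⟨{0, 1}, rfl⟩⟩

lemma petersenGraph_dist_le_two (u v) : petersenGraph.dist u v ≤ 2 :=
  (petersenGraph_exists_walk_length_le_two u v).elim fun p hp ↦ (dist_le p).trans hp

theorem sdim_petersen : sdim petersenGraph = 8 := by
  rw [sdim_eq_card_sub_two petersenGraph_connected petersenGraph_dist_le_two
    petersenGraph_cliqueFree_three (a := ⟨{0, 1}, rfl⟩) (b := ⟨{2, 3}, rfl⟩)
    (c := ⟨{2, 4}, rfl⟩) (by decide) (by decide) (by decide), Fintype.card_finset_len]
  rfl
end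

section
/- Let G and H be non-complete graphs, not both disjoint unions of two cliques. Then for vertices (g,h), (g',h') of the modular product G ⋄ H, d((g,h),(g',h')) = 3 if and only if at least one of the following holds: (1) N_G[g] = N_G[g'], d_H(h,h') ≥ 3, and (N_G[g] = V(G) or {h,h'} is a γ_H-pair); (2) the symmetric condition with roles of G and H exchanged. -/
open SimpleGraph

variable {V : Type*} {W : Type*}

/-- The direct (tensor) product of two graphs. -/
def directProd (G : SimpleGraph V) (H : SimpleGraph W) : SimpleGraph (V × W) where
  Adj x y := G.Adj x.1 y.1 ∧ H.Adj x.2 y.2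
  symm := ⟨by rintro x y ⟨h1, h2⟩; exact ⟨h1.symm, h2.symm⟩⟩
  loopless := ⟨by rintro x ⟨h1, -⟩; exact G.loopless.irrefl _ h1⟩

/-- The modular product of two graphs:
`E(G ⋄ H) = E(G □ H) ∪ E(G × H) ∪ E(Ḡ × H̄)`. -/
def modProd (G : SimpleGraph V) (H : SimpleGraph W) : SimpleGraph (V × W) :=
  (G □ H) ⊔ directProd G H ⊔ directProd Gᶜ Hᶜ

/-- The closed neighborhood of a vertex. -/
def closedNbr (G : SimpleGraph V) (v : V) : Set V :=
  insert v (G.neighborSet v)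

/-- `{u, w}` is a `γ`-pair of `G`: their closed neighborhoods are disjoint and
cover all of `G`. -/
def GammaPair (G : SimpleGraph V) (u w : V) : Prop :=
  closedNbr G u ∩ closedNbr G w = ∅ ∧ closedNbr G u ∪ closedNbr G w = Set.univ

/-- `G` is a complete graph. -/
def IsCompleteGr (G : SimpleGraph V) : Prop :=
  ∀ u v : V, u ≠ v → G.Adj u v

/-- `G` is a disjoint union of two cliques. -/
def IsTwoCliques (G : SimpleGraph V) : Prop :=
  ∃ A : Set V,
    (∀ u ∈ A, ∀ v ∈ A, u ≠ v → G.Adj u v) ∧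
    (∀ u ∉ A, ∀ v ∉ A, u ≠ v → G.Adj u v) ∧
    (∀ u ∈ A, ∀ v ∉ A, ¬ G.Adj u v)

/-!
Write `a ≃ c` for `a ∈ N[c]`. Two distinct vertices of `G ⋄ H` are adjacent exactly when
`a ≃ c ↔ b ≃ d`, so the closed neighbourhood of `(c, d)` is `{(a, b) | a ≃ c ↔ b ≃ d}`.
Distance at least 3 means disjoint closed neighbourhoods, and testing the candidate common
neighbours `(a, h)`, `(a, h')`, `(g, b)` and `(a, b)` shows that this happens exactly under
condition (1) or (2), for arbitrary `G` and `H`. Conversely, under (1) a path of length 3 is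
built by hand: from a non-edge of `G` when `g` is universal, and otherwise from a witness that
`G` or `H` is not a disjoint union of two cliques with parts `N[g]`, `N[g]ᶜ` or `N[h]`, `N[h']`
respectively. Condition (2) reduces to (1) through the isomorphism `G ⋄ H ≅ H ⋄ G`.
-/

section ClosedNeighborhood

variable {G : SimpleGraph V} {u v : V}

lemma mem_closedNbr : u ∈ closedNbr G v ↔ u = v ∨ G.Adj u v := by
  rw [closedNbr, Set.mem_insert_iff, mem_neighborSet, adj_comm]

lemma mem_closedNbr_self (v : V) : v ∈ closedNbr G v :=
  Set.mem_insert v _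

lemma mem_closedNbr_comm : u ∈ closedNbr G v ↔ v ∈ closedNbr G u := by
  simp only [mem_closedNbr, eq_comm, adj_comm]

lemma three_le_edist_iff : 3 ≤ G.edist u v ↔ closedNbr G u ∩ closedNbr G v = ∅ := by
  rw [show (3 : ℕ∞) = 2 + 1 from rfl, ENat.add_one_le_iff (by decide), two_lt_edist_iff,
    Set.eq_empty_iff_forall_notMem, Set.eq_empty_iff_forall_notMem]
  simp only [Set.mem_inter_iff, mem_closedNbr, mem_commonNeighbors]
  constructor
  · rintro ⟨hne, hnadj, hcommon⟩ x ⟨rfl | hxu, rfl | hxv⟩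
    exacts [hne rfl, hnadj hxv, hnadj hxu.symm, hcommon x ⟨hxu.symm, hxv.symm⟩]
  · intro h
    exact ⟨fun huv => h u ⟨.inl rfl, .inl huv⟩, fun huv => h u ⟨.inl rfl, .inr huv⟩,
      fun x hx => h x ⟨.inr hx.1.symm, .inr hx.2.symm⟩⟩

lemma notMem_closedNbr_of_three_le_edist (h : 3 ≤ G.edist u v) : u ∉ closedNbr G v :=
  fun hu => (Set.eq_empty_iff_forall_notMem.mp (three_le_edist_iff.mp h)) u
    ⟨mem_closedNbr_self u, hu⟩

lemma not_isCompleteGr_iff : ¬IsCompleteGr G ↔ ∃ u v, u ∉ closedNbr G v := by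
  simp only [IsCompleteGr, mem_closedNbr, not_or, not_forall, exists_prop]

lemma not_isTwoCliques_iff :
    ¬IsTwoCliques G ↔ ∀ A : Set V, (∃ u ∈ A, ∃ v ∈ A, u ∉ closedNbr G v) ∨
      (∃ u ∉ A, ∃ v ∉ A, u ∉ closedNbr G v) ∨ ∃ u ∈ A, ∃ v ∉ A, G.Adj u v := by
  simp only [IsTwoCliques, mem_closedNbr, not_or, not_exists, not_and_or, not_forall,
    exists_prop, not_not]

lemma GammaPair.closedNbr_eq_compl (hγ : GammaPair G u v) :
    closedNbr G v = (closedNbr G u)ᶜ := by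
  ext x
  have hinter := Set.eq_empty_iff_forall_notMem.mp hγ.1 x
  have hunion := Set.eq_univ_iff_forall.mp hγ.2 x
  simp only [Set.mem_inter_iff, Set.mem_union] at hinter hunion
  exact ⟨fun hv hu => hinter ⟨hu, hv⟩, hunion.resolve_left⟩

end ClosedNeighborhood

namespace SimpleGraph

variable {G : SimpleGraph V} {u v : V}

lemma Adj.mem_closedNbr (huv : G.Adj u v) : u ∈ closedNbr G v :=
  _root_.mem_closedNbr.mpr (.inr huv)

lemma edist_le_three {x y : V} (hux : G.Adj u x) (hxy : G.Adj x y) (hyv : G.Adj y v) :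
    G.edist u v ≤ 3 := by
  simpa using (Walk.cons hux (.cons hxy (.cons hyv .nil))).edist_le

lemma Hom.edist_le {G' : SimpleGraph W} (f : G →g G') (u v : V) :
    G'.edist (f u) (f v) ≤ G.edist u v := by
  by_cases hr : G.Reachable u v
  · obtain ⟨p, hp⟩ := hr.exists_walk_length_eq_edist
    simpa [hp] using (p.map f).edist_le
  · simp [edist_eq_top_of_not_reachable hr]

lemma Iso.edist_eq {G' : SimpleGraph W} (e : G ≃g G') (u v : V) :
    G'.edist (e u) (e v) = G.edist u v :=
  le_antisymm (e.toHom.edist_le u v) (by simpa using e.symm.toHom.edist_le (e u) (e v))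

end SimpleGraph

section ModularProduct

variable {G : SimpleGraph V} {H : SimpleGraph W} {g g' a c : V} {h h' b d : W}

lemma modProd_adj_iff {x y : V × W} :
    (modProd G H).Adj x y ↔ x ≠ y ∧ (x.1 ∈ closedNbr G y.1 ↔ x.2 ∈ closedNbr H y.2) := by
  obtain ⟨a, b⟩ := x
  obtain ⟨c, d⟩ := y
  simp only [modProd, directProd, sup_adj, boxProd_adj, compl_adj, mem_closedNbr, ne_eq,
    Prod.mk.injEq]
  rcases eq_or_ne a c with rfl | hac <;> rcases eq_or_ne b d with rfl | hbd <;> simp [*]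
  tauto

lemma mem_closedNbr_modProd :
    (a, b) ∈ closedNbr (modProd G H) (c, d) ↔ (a ∈ closedNbr G c ↔ b ∈ closedNbr H d) := by
  rw [mem_closedNbr, modProd_adj_iff]
  by_cases heq : (a, b) = (c, d)
  · simp only [Prod.mk.injEq] at heq
    simp [heq.1, heq.2, mem_closedNbr_self]
  · simp [heq]

lemma modProd_adj_of_mem (hne : a ≠ c ∨ b ≠ d) (ha : a ∈ closedNbr G c)
    (hb : b ∈ closedNbr H d) : (modProd G H).Adj (a, b) (c, d) :=
  modProd_adj_iff.mpr ⟨by rintro ⟨⟩; simp at hne, iff_of_true ha hb⟩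

lemma modProd_adj_of_notMem (ha : a ∉ closedNbr G c) (hb : b ∉ closedNbr H d) :
    (modProd G H).Adj (a, b) (c, d) :=
  modProd_adj_iff.mpr
    ⟨by rintro ⟨⟩; exact ha (mem_closedNbr_self a), iff_of_false ha hb⟩

def modProdComm (G : SimpleGraph V) (H : SimpleGraph W) : modProd G H ≃g modProd H G where
  toEquiv := Equiv.prodComm V W
  map_rel_iff' {x y} := by
    simp only [Equiv.prodComm_apply, modProd_adj_iff, Prod.fst_swap, Prod.snd_swap, ne_eq,
      Prod.swap_inj]
    exact and_congr_right' Iff.comm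


lemma closedNbr_modProd_inter_eq_empty_iff_of_mem (hg : g ∈ closedNbr G g')
    (hh : h ∉ closedNbr H h') :
    closedNbr (modProd G H) (g, h) ∩ closedNbr (modProd G H) (g', h') = ∅ ↔
      closedNbr G g = closedNbr G g' ∧ 3 ≤ H.edist h h' ∧
        (closedNbr G g = Set.univ ∨ GammaPair H h h') := by
  rw [three_le_edist_iff, Set.eq_empty_iff_forall_notMem]
  simp only [Prod.forall, Set.mem_inter_iff, mem_closedNbr_modProd]
  constructor
  · intro hfar
    have htwin : closedNbr G g = closedNbr G g' := by
      ext a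
      refine ⟨fun ha => ?_, fun ha => ?_⟩ <;> by_contra ha'
      · exact hfar a h ⟨iff_of_true ha (mem_closedNbr_self h), iff_of_false ha' hh⟩
      · exact hfar a h'
          ⟨iff_of_false ha' (mt mem_closedNbr_comm.mp hh), iff_of_true ha (mem_closedNbr_self h')⟩
    have hdisj : closedNbr H h ∩ closedNbr H h' = ∅ :=
      Set.eq_empty_iff_forall_notMem.mpr fun b hb =>
        hfar g b ⟨iff_of_true (mem_closedNbr_self g) hb.1, iff_of_true hg hb.2⟩
    refine ⟨htwin, hdisj, or_iff_not_imp_left.mpr fun huniv => ⟨hdisj, ?_⟩⟩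
    obtain ⟨a, ha⟩ := (Set.ne_univ_iff_exists_notMem _).mp huniv
    refine Set.eq_univ_iff_forall.mpr fun b => ?_
    by_contra hb
    rw [Set.mem_union, not_or] at hb
    exact hfar a b ⟨iff_of_false ha hb.1, iff_of_false (htwin ▸ ha) hb.2⟩
  · rintro ⟨htwin, hdisj, hcov⟩ a b ⟨hh₁, hh₂⟩
    rw [← htwin] at hh₂
    by_cases ha : a ∈ closedNbr G g
    · exact Set.eq_empty_iff_forall_notMem.mp hdisj b ⟨hh₁.mp ha, hh₂.mp ha⟩
    · rcases hcov with huniv | ⟨-, hunion⟩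
      · exact ha (huniv ▸ Set.mem_univ a)
      · rcases Set.eq_univ_iff_forall.mp hunion b with hb | hb
        exacts [ha (hh₁.mpr hb), ha (hh₂.mpr hb)]

lemma closedNbr_modProd_inter_eq_empty_iff :
    closedNbr (modProd G H) (g, h) ∩ closedNbr (modProd G H) (g', h') = ∅ ↔
      (closedNbr G g = closedNbr G g' ∧ 3 ≤ H.edist h h' ∧
          (closedNbr G g = Set.univ ∨ GammaPair H h h')) ∨
        (closedNbr H h = closedNbr H h' ∧ 3 ≤ G.edist g g' ∧
          (closedNbr H h = Set.univ ∨ GammaPair G g g')) := by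
  have hswap : closedNbr (modProd H G) (h, g) ∩ closedNbr (modProd H G) (h', g') = ∅ ↔
      closedNbr (modProd G H) (g, h) ∩ closedNbr (modProd G H) (g', h') = ∅ := by
    rw [← three_le_edist_iff, ← three_le_edist_iff, ← (modProdComm G H).edist_eq]
    rfl
  constructor
  · intro hfar
    have hnotMem : ¬(g ∈ closedNbr G g' ↔ h ∈ closedNbr H h') := fun hiff =>
      Set.eq_empty_iff_forall_notMem.mp hfar (g, h)
        ⟨mem_closedNbr_self _, mem_closedNbr_modProd.mpr hiff⟩
    by_cases hg : g ∈ closedNbr G g'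
    · exact .inl ((closedNbr_modProd_inter_eq_empty_iff_of_mem hg
        fun hh => hnotMem (iff_of_true hg hh)).mp hfar)
    · have hh : h ∈ closedNbr H h' := by_contra fun hh => hnotMem (iff_of_false hg hh)
      exact .inr ((closedNbr_modProd_inter_eq_empty_iff_of_mem hh hg).mp (hswap.mpr hfar))
  · rintro (hc | hc)
    · exact (closedNbr_modProd_inter_eq_empty_iff_of_mem (hc.1 ▸ mem_closedNbr_self g)
        (notMem_closedNbr_of_three_le_edist hc.2.1)).mpr hc
    · exact hswap.mp ((closedNbr_modProd_inter_eq_empty_iff_of_mem (hc.1 ▸ mem_closedNbr_self h)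
        (notMem_closedNbr_of_three_le_edist hc.2.1)).mpr hc)

lemma edist_modProd_le_three_of_closedNbr_eq_univ (hGnc : ¬IsCompleteGr G)
    (htwin : closedNbr G g = closedNbr G g') (huniv : closedNbr G g = Set.univ)
    (hh : h ∉ closedNbr H h') : (modProd G H).edist (g, h) (g', h') ≤ 3 := by
  obtain ⟨p, q, hpq⟩ := not_isCompleteGr_iff.mp hGnc
  have hg : ∀ x, x ∈ closedNbr G g := Set.eq_univ_iff_forall.mp huniv
  have hg' : ∀ x, x ∈ closedNbr G g' := Set.eq_univ_iff_forall.mp (htwin ▸ huniv)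
  have hpg : p ≠ g := by rintro rfl; exact hpq (mem_closedNbr_comm.mp (hg q))
  have hqg' : q ≠ g' := by rintro rfl; exact hpq (hg' p)
  exact edist_le_three
    (modProd_adj_of_mem (.inl hpg.symm) (mem_closedNbr_comm.mp (hg p)) (mem_closedNbr_self h))
    (modProd_adj_of_notMem hpq hh)
    (modProd_adj_of_mem (.inl hqg') (hg' q) (mem_closedNbr_self h'))

lemma edist_modProd_le_three_of_not_isTwoCliques_left (hG : ¬IsTwoCliques G)
    (htwin : closedNbr G g = closedNbr G g') (hh : h ∉ closedNbr H h') :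
    (modProd G H).edist (g, h) (g', h') ≤ 3 := by
  have hh' : h' ∉ closedNbr H h := mt mem_closedNbr_comm.mp hh
  rcases not_isTwoCliques_iff.mp hG (closedNbr G g) with
    ⟨u, hu, v, hv, huv⟩ | ⟨u, hu, v, hv, huv⟩ | ⟨u, hu, v, hv, huv⟩
  · have hug : u ≠ g := by rintro rfl; exact huv (mem_closedNbr_comm.mp hv)
    have hvg' : v ≠ g' := by rintro rfl; exact huv (htwin ▸ hu)
    exact edist_le_three
      (modProd_adj_of_mem (.inl hug.symm) (mem_closedNbr_comm.mp hu) (mem_closedNbr_self h))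
      (modProd_adj_of_notMem huv hh)
      (modProd_adj_of_mem (.inl hvg') (htwin ▸ hv) (mem_closedNbr_self h'))
  · exact edist_le_three (modProd_adj_of_notMem (mt mem_closedNbr_comm.mp hu) hh)
      (modProd_adj_of_notMem huv hh') (modProd_adj_of_notMem (htwin ▸ hv) hh)
  · have hug : u ≠ g := by rintro rfl; exact hv huv.symm.mem_closedNbr
    exact edist_le_three
      (modProd_adj_of_mem (.inl hug.symm) (mem_closedNbr_comm.mp hu) (mem_closedNbr_self h))
      (modProd_adj_of_mem (.inl huv.ne) huv.mem_closedNbr (mem_closedNbr_self h))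
      (modProd_adj_of_notMem (htwin ▸ hv) hh)

lemma edist_modProd_le_three_of_not_isTwoCliques_right (hH : ¬IsTwoCliques H)
    (htwin : closedNbr G g = closedNbr G g') (huniv : closedNbr G g ≠ Set.univ)
    (hcompl : closedNbr H h' = (closedNbr H h)ᶜ) :
    (modProd G H).edist (g, h) (g', h') ≤ 3 := by
  obtain ⟨a, ha⟩ := (Set.ne_univ_iff_exists_notMem _).mp huniv
  have ha' : g ∉ closedNbr G a := mt mem_closedNbr_comm.mp ha
  rcases not_isTwoCliques_iff.mp hH (closedNbr H h) with
    ⟨b, hb, b', hb', hbb'⟩ | ⟨b, hb, b', hb', hbb'⟩ | ⟨b, hb, b', hb', hbb'⟩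
  · have hbh : b ≠ h := by rintro rfl; exact hbb' (mem_closedNbr_comm.mp hb')
    exact edist_le_three
      (modProd_adj_of_mem (.inr hbh.symm) (mem_closedNbr_self g) (mem_closedNbr_comm.mp hb))
      (modProd_adj_of_notMem ha' hbb')
      (modProd_adj_of_notMem (htwin ▸ ha) (by rwa [hcompl, Set.mem_compl_iff, not_not]))
  · have hb'h' : b' ≠ h' := by rintro rfl; exact hbb' (hcompl ▸ hb)
    exact edist_le_three (modProd_adj_of_notMem ha' (mt mem_closedNbr_comm.mp hb))
      (modProd_adj_of_notMem (htwin ▸ ha) hbb')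
      (modProd_adj_of_mem (.inr hb'h') (mem_closedNbr_self g') (hcompl ▸ hb'))
  · have hbh : b ≠ h := by rintro rfl; exact hb' hbb'.symm.mem_closedNbr
    have hb'h' : b' ≠ h' := by
      rintro rfl
      have hbh' := hbb'.mem_closedNbr
      rw [hcompl] at hbh'
      exact hbh' hb
    exact edist_le_three
      (modProd_adj_of_mem (.inr hbh.symm) (mem_closedNbr_self g) (mem_closedNbr_comm.mp hb))
      (modProd_adj_of_mem (.inr hbb'.ne) (htwin ▸ mem_closedNbr_self g) hbb'.mem_closedNbr)
      (modProd_adj_of_mem (.inr hb'h') (mem_closedNbr_self g') (hcompl ▸ hb'))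

lemma edist_modProd_le_three (hGnc : ¬IsCompleteGr G)
    (hnb : ¬(IsTwoCliques G ∧ IsTwoCliques H)) (htwin : closedNbr G g = closedNbr G g')
    (hfar : 3 ≤ H.edist h h') (hcov : closedNbr G g = Set.univ ∨ GammaPair H h h') :
    (modProd G H).edist (g, h) (g', h') ≤ 3 := by
  have hh := notMem_closedNbr_of_three_le_edist hfar
  by_cases huniv : closedNbr G g = Set.univ
  · exact edist_modProd_le_three_of_closedNbr_eq_univ hGnc htwin huniv hh
  by_cases hH : IsTwoCliques H
  · exact edist_modProd_le_three_of_not_isTwoCliques_left (fun hG => hnb ⟨hG, hH⟩) htwin hh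
  · exact edist_modProd_le_three_of_not_isTwoCliques_right hH htwin huniv
      (hcov.resolve_left huniv).closedNbr_eq_compl

end ModularProduct

theorem modProd_dist_eq_three_iff_general
    (G : SimpleGraph V) (H : SimpleGraph W)
    (hGnc : ¬ IsCompleteGr G) (hHnc : ¬ IsCompleteGr H)
    (hnb : ¬ (IsTwoCliques G ∧ IsTwoCliques H)) :
    ∀ (g g' : V) (h h' : W),
      (modProd G H).dist (g, h) (g', h') = 3 ↔
      ((closedNbr G g = closedNbr G g' ∧ 3 ≤ H.edist h h' ∧
          (closedNbr G g = Set.univ ∨ GammaPair H h h')) ∨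
        (closedNbr H h = closedNbr H h' ∧ 3 ≤ G.edist g g' ∧
          (closedNbr H h = Set.univ ∨ GammaPair G g g'))) := by
  intro g g' h h'
  rw [SimpleGraph.dist, ENat.toNat_eq_iff three_ne_zero, Nat.cast_ofNat, le_antisymm_iff,
    three_le_edist_iff, closedNbr_modProd_inter_eq_empty_iff]
  refine and_iff_right_of_imp ?_
  rintro (⟨htwin, hfar, hcov⟩ | ⟨htwin, hfar, hcov⟩)
  · exact edist_modProd_le_three hGnc hnb htwin hfar hcov
  · rw [← (modProdComm G H).edist_eq]
    exact edist_modProd_le_three hHnc (hnb ∘ And.symm) htwin hfar hcov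

theorem modProd_dist_eq_three_iff [Fintype V] [Fintype W]
    (G : SimpleGraph V) (H : SimpleGraph W)
    (hGnc : ¬ IsCompleteGr G) (hHnc : ¬ IsCompleteGr H)
    (hnb : ¬ (IsTwoCliques G ∧ IsTwoCliques H)) :
    ∀ (g g' : V) (h h' : W),
      (modProd G H).dist (g, h) (g', h') = 3 ↔
      ((closedNbr G g = closedNbr G g' ∧ 3 ≤ H.edist h h' ∧
          (closedNbr G g = Set.univ ∨ GammaPair H h h')) ∨
        (closedNbr H h = closedNbr H h' ∧ 3 ≤ G.edist g g' ∧
          (closedNbr H h = Set.univ ∨ GammaPair G g g'))) :=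
  modProd_dist_eq_three_iff_general G H hGnc hHnc hnb
end
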